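/- arXiv:2010.03393 — 2 statements merged into one kernel-verified Lean document; each statement's English description precedes it below -/
import Mathlib

section
/- A graph H contains a predator if and only if its associated bipartite graph H* contains an incomparable C4, i.e., a predator (a'_1, a'_2, b''_1, b''_2) consisting of four distinct vertices forming a 4-cycle in which the two vertices on each side of the bipartition are incomparable. -/
/-!
In `H*` the neighbourhood of `a'` is the copy `N(a)''` of `N(a)`, and, `H` being symmetric, the
neighbourhood of `b''` is `N(b)'`. So neighbourhood inclusions, hence incomparability, as well as
adjacency between the two sides, are the same in `H` and in `H*`: a tuple `(a₁, a₂, b₁, b₂)` is a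
predator of `H` exactly when `(a₁', a₂', b₁'', b₂'')` is one of `H*`.
-/

def nbhd {β : Type*} (Hadj : β → β → Prop) (v : β) : Set β := {u | Hadj v u}

def Incomp {β : Type*} (Hadj : β → β → Prop) (u v : β) : Prop :=
  ¬ (nbhd Hadj u ⊆ nbhd Hadj v) ∧ ¬ (nbhd Hadj v ⊆ nbhd Hadj u)

def IncompSet {β : Type*} (Hadj : β → β → Prop) (S : Set β) : Prop :=
  ∀ u ∈ S, ∀ v ∈ S, u ≠ v → Incomp Hadj u v

def IsPredator {β : Type*} (Hadj : β → β → Prop) (a₁ a₂ b₁ b₂ : β) : Prop :=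
  a₁ ≠ a₂ ∧ b₁ ≠ b₂ ∧ IncompSet Hadj {a₁, a₂} ∧ IncompSet Hadj {b₁, b₂} ∧
    ∀ a ∈ ({a₁, a₂} : Set β), ∀ b ∈ ({b₁, b₂} : Set β), Hadj a b

/-- The associated bipartite graph `H* = H × K₂`: vertices `a' = Sum.inl a` and
`a'' = Sum.inr a`, with `a'b''` an edge whenever `ab ∈ E(H)`. -/
def starAdj {β : Type*} (Hadj : β → β → Prop) : β ⊕ β → β ⊕ β → Prop
  | Sum.inl a, Sum.inr b => Hadj a b
  | Sum.inr a, Sum.inl b => Hadj b a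
  | _, _ => False

section

variable {β : Type*} {R : β → β → Prop}

theorem Incomp.symm {u v : β} (h : Incomp R u v) : Incomp R v u := And.symm h

theorem incompSet_pair_iff {u v : β} : IncompSet R {u, v} ↔ (u ≠ v → Incomp R u v) := by
  constructor
  · intro h huv
    exact h u (by simp) v (by simp) huv
  · rintro h x (rfl | rfl) y (rfl | rfl) hxy
    · exact absurd rfl hxy
    · exact h hxy
    · exact (h hxy.symm).symm
    · exact absurd rfl hxy

theorem nbhd_starAdj_inl (a : β) : nbhd (starAdj R) (Sum.inl a) = Sum.inr '' nbhd R a := by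
  ext (c | c) <;> simp [nbhd, starAdj]

theorem nbhd_starAdj_inr [Std.Symm R] (b : β) :
    nbhd (starAdj R) (Sum.inr b) = Sum.inl '' nbhd R b := by
  ext (c | c)
  · simpa [nbhd, starAdj] using ⟨Std.Symm.symm c b, Std.Symm.symm b c⟩
  · simp [nbhd, starAdj]

theorem incomp_starAdj_inl (a a' : β) :
    Incomp (starAdj R) (Sum.inl a) (Sum.inl a') ↔ Incomp R a a' := by
  simp only [Incomp, nbhd_starAdj_inl, Set.image_subset_image_iff Sum.inr_injective]

theorem incomp_starAdj_inr [Std.Symm R] (b b' : β) :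
    Incomp (starAdj R) (Sum.inr b) (Sum.inr b') ↔ Incomp R b b' := by
  simp only [Incomp, nbhd_starAdj_inr, Set.image_subset_image_iff Sum.inl_injective]

theorem incompSet_starAdj_inl (a a' : β) :
    IncompSet (starAdj R) {Sum.inl a, Sum.inl a'} ↔ IncompSet R {a, a'} := by
  simp only [incompSet_pair_iff, Sum.inl_injective.ne_iff, incomp_starAdj_inl]

theorem incompSet_starAdj_inr [Std.Symm R] (b b' : β) :
    IncompSet (starAdj R) {Sum.inr b, Sum.inr b'} ↔ IncompSet R {b, b'} := by
  simp only [incompSet_pair_iff, Sum.inr_injective.ne_iff, incomp_starAdj_inr]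

theorem isPredator_starAdj_iff [Std.Symm R] (a₁ a₂ b₁ b₂ : β) :
    IsPredator (starAdj R) (Sum.inl a₁) (Sum.inl a₂) (Sum.inr b₁) (Sum.inr b₂) ↔
      IsPredator R a₁ a₂ b₁ b₂ := by
  simp only [IsPredator, Sum.inl_injective.ne_iff, Sum.inr_injective.ne_iff,
    incompSet_starAdj_inl, incompSet_starAdj_inr, Set.forall_mem_insert,
    Set.mem_singleton_iff, forall_eq, starAdj]

end

/-- `H` contains a predator iff `H*` contains an incomparable `C₄`, i.e. a
predator `(a₁', a₂', b₁'', b₂'')` (four distinct vertices of `H*` forming a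
4-cycle with the two vertices on each side of the bipartition incomparable). -/
theorem stmt2 {β : Type*} (Hadj : β → β → Prop) (hsymm : Symmetric Hadj) :
    (∃ a₁ a₂ b₁ b₂ : β, IsPredator Hadj a₁ a₂ b₁ b₂) ↔
    (∃ a₁ a₂ b₁ b₂ : β, IsPredator (starAdj Hadj)
      (Sum.inl a₁) (Sum.inl a₂) (Sum.inr b₁) (Sum.inr b₂)) := by
  have : Std.Symm Hadj := ⟨fun _ _ h => hsymm h⟩
  exact exists₄_congr fun a₁ a₂ b₁ b₂ => (isPredator_starAdj_iff a₁ a₂ b₁ b₂).symm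
end

section
/- Let H be a strong split graph with loop-vertices P (inducing a reflexive clique) and loopless vertices B (independent). Let (G, L) be a list-homomorphism instance for H in which every list L(v) is a nonempty incomparable set. Let X = {v : L(v) ∩ P ≠ ∅} and Y = {v : L(v) ∩ B ≠ ∅}. Then X and Y partition V(G); moreover if Y is independent in G and G' is obtained from G by adding all edges inside X, then (G, L) admits a list homomorphism to H if and only if (G', L) does. -/
/-- Existence of a list homomorphism from `(G, L)` to `H`. -/
def ListHomEx {α β : Type*} (Gadj : α → α → Prop) (Hadj : β → β → Prop)
    (L : α → Set β) : Prop :=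
  ∃ f : α → β, (∀ v, f v ∈ L v) ∧ ∀ u v, Gadj u v → Hadj (f u) (f v)

/-!
A loopless vertex `b ∈ B` has all its neighbours in `P`, and `P` is a reflexive clique, so
`N(b) ⊆ N(p)` for every `p ∈ P`. Incomparability therefore forces every list to lie inside `P`
or inside `B`. Consequently every list homomorphism maps `X` into the clique `P`, which makes
the edges added inside `X` automatic.
-/

section StrongSplit

variable {β : Type*} {Hadj : β → β → Prop} {P B : Set β}

theorem nbhd_subset_nbhd_of_mem_of_mem (hPB : P ∪ B = Set.univ)
    (hPclique : ∀ p ∈ P, ∀ q ∈ P, Hadj p q) (hBindep : ∀ b ∈ B, ∀ b' ∈ B, ¬ Hadj b b')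
    {p b : β} (hp : p ∈ P) (hb : b ∈ B) : nbhd Hadj b ⊆ nbhd Hadj p := by
  intro q hbq
  have hq : q ∈ P ∪ B := hPB ▸ Set.mem_univ q
  rcases hq with hqP | hqB
  · exact hPclique p hp q hqP
  · exact absurd hbq (hBindep b hb q hqB)

theorem IncompSet.subset_of_inter_nonempty (hPB : P ∪ B = Set.univ)
    (hPclique : ∀ p ∈ P, ∀ q ∈ P, Hadj p q) (hBindep : ∀ b ∈ B, ∀ b' ∈ B, ¬ Hadj b b')
    {S : Set β} (hS : IncompSet Hadj S) (hSP : (S ∩ P).Nonempty) : S ⊆ P := by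
  obtain ⟨p, hpS, hpP⟩ := hSP
  intro x hxS
  have hx : x ∈ P ∪ B := hPB ▸ Set.mem_univ x
  rcases hx with hxP | hxB
  · exact hxP
  · -- `p` has a loop and `x` does not
    have hxp : x ≠ p := fun h => hBindep x hxB x hxB (h ▸ hPclique p hpP p hpP)
    exact absurd (nbhd_subset_nbhd_of_mem_of_mem hPB hPclique hBindep hpP hxB)
      (hS x hxS p hpS hxp).1

theorem IncompSet.inter_nonempty_xor (hPB : P ∪ B = Set.univ)
    (hPclique : ∀ p ∈ P, ∀ q ∈ P, Hadj p q) (hBindep : ∀ b ∈ B, ∀ b' ∈ B, ¬ Hadj b b')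
    {S : Set β} (hS : IncompSet Hadj S) (hne : S.Nonempty) :
    ((S ∩ P).Nonempty ∨ (S ∩ B).Nonempty) ∧ ¬ ((S ∩ P).Nonempty ∧ (S ∩ B).Nonempty) := by
  refine ⟨?_, ?_⟩
  · obtain ⟨x, hxS⟩ := hne
    have hx : x ∈ P ∪ B := hPB ▸ Set.mem_univ x
    exact hx.imp (fun hxP => ⟨x, hxS, hxP⟩) (fun hxB => ⟨x, hxS, hxB⟩)
  · rintro ⟨hSP, b, hbS, hbB⟩
    have hbP := hS.subset_of_inter_nonempty hPB hPclique hBindep hSP hbS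
    exact hBindep b hbB b hbB (hPclique b hbP b hbP)

end StrongSplit

section ListHom

variable {α β : Type*} {Gadj : α → α → Prop} {Hadj : β → β → Prop} {L : α → Set β}

theorem ListHomEx.of_le {Gadj' : α → α → Prop} (hle : ∀ u v, Gadj u v → Gadj' u v)
    (h : ListHomEx Gadj' Hadj L) : ListHomEx Gadj Hadj L := by
  obtain ⟨f, hfL, hf⟩ := h
  exact ⟨f, hfL, fun u v huv => hf u v (hle u v huv)⟩

theorem ListHomEx.sup_clique {P : Set β} (hPclique : ∀ p ∈ P, ∀ q ∈ P, Hadj p q)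
    (hLP : ∀ v, (L v ∩ P).Nonempty → L v ⊆ P) (h : ListHomEx Gadj Hadj L) :
    ListHomEx (fun u v => Gadj u v ∨
      ((L u ∩ P).Nonempty ∧ (L v ∩ P).Nonempty ∧ u ≠ v)) Hadj L := by
  obtain ⟨f, hfL, hf⟩ := h
  refine ⟨f, hfL, fun u v huv => ?_⟩
  rcases huv with hG | ⟨huP, hvP, -⟩
  · exact hf u v hG
  · exact hPclique _ (hLP u huP (hfL u)) _ (hLP v hvP (hfL v))

end ListHom

theorem stmt5_general {α β : Type*} (Gadj : α → α → Prop)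
    (Hadj : β → β → Prop)
    (P B : Set β) (hPB : P ∪ B = Set.univ)
    (hPclique : ∀ p ∈ P, ∀ q ∈ P, Hadj p q)
    (hBindep : ∀ b ∈ B, ∀ b' ∈ B, ¬ Hadj b b')
    (L : α → Set β)
    (hLne : ∀ v, (L v).Nonempty) (hLinc : ∀ v, IncompSet Hadj (L v)) :
    (∀ v : α,
        (((L v ∩ P).Nonempty ∨ (L v ∩ B).Nonempty) ∧
          ¬ ((L v ∩ P).Nonempty ∧ (L v ∩ B).Nonempty))) ∧
    ((∀ u v : α, (L u ∩ B).Nonempty → (L v ∩ B).Nonempty → ¬ Gadj u v) →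
      (ListHomEx Gadj Hadj L ↔
        ListHomEx (fun u v => Gadj u v ∨
          ((L u ∩ P).Nonempty ∧ (L v ∩ P).Nonempty ∧ u ≠ v)) Hadj L)) := by
  have hLP : ∀ v, (L v ∩ P).Nonempty → L v ⊆ P := fun v =>
    (hLinc v).subset_of_inter_nonempty hPB hPclique hBindep
  refine ⟨fun v => (hLinc v).inter_nonempty_xor hPB hPclique hBindep (hLne v), fun _ => ?_⟩
  exact ⟨ListHomEx.sup_clique hPclique hLP, ListHomEx.of_le fun _ _ => Or.inl⟩

/-- Strong split target `H` with loop-part `P` (reflexive clique) and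
independent loopless part `B`.  For a list instance with nonempty incomparable
lists, `X := {v : L v ∩ P ≠ ∅}` and `Y := {v : L v ∩ B ≠ ∅}` partition `V(G)`;
and if `Y` is independent in `G`, then completing `X` to a clique does not
change the existence of a list homomorphism. -/
theorem stmt5 {α β : Type*} (Gadj : α → α → Prop) (hGsymm : Symmetric Gadj)
    (Hadj : β → β → Prop) (hHsymm : Symmetric Hadj)
    (P B : Set β) (hPB : P ∪ B = Set.univ) (hPBdisj : P ∩ B = ∅)
    (hPclique : ∀ p ∈ P, ∀ q ∈ P, Hadj p q)
    (hBindep : ∀ b ∈ B, ∀ b' ∈ B, ¬ Hadj b b')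
    (L : α → Set β)
    (hLne : ∀ v, (L v).Nonempty) (hLinc : ∀ v, IncompSet Hadj (L v)) :
    (∀ v : α,
        (((L v ∩ P).Nonempty ∨ (L v ∩ B).Nonempty) ∧
          ¬ ((L v ∩ P).Nonempty ∧ (L v ∩ B).Nonempty))) ∧
    ((∀ u v : α, (L u ∩ B).Nonempty → (L v ∩ B).Nonempty → ¬ Gadj u v) →
      (ListHomEx Gadj Hadj L ↔
        ListHomEx (fun u v => Gadj u v ∨
          ((L u ∩ P).Nonempty ∧ (L v ∩ P).Nonempty ∧ u ≠ v)) Hadj L)) :=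
  stmt5_general Gadj Hadj P B hPB hPclique hBindep L hLne hLinc
end
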